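/- arXiv:1101.3058 — 2 statements merged into one kernel-verified Lean document; each statement's English description precedes it below -/
import Mathlib

section
/- If u ∈ H¹(ℝ^N;ℂ) satisfies ‖∇u‖_{L²} ‖u‖_{L²}^σ ≤ ‖∇Q‖_{L²} ‖Q‖_{L²}^σ, then ‖∇u‖_{L²} ‖u‖_{L²}^σ ≤ ( E(u) M(u)^σ / (E(Q) M(Q)^σ) )^{1/2} ‖∇Q‖_{L²} ‖Q‖_{L²}^σ. -/
/-!
Put `y = ‖∇u‖ M(u)^{σ/2}`. Since `σ Nα = (4 - (N-2)α) + 4σ`, the Gagliardo–Nirenberg inequality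
gives `E(u) M(u)^σ ≥ f(y) := y²/2 - C_GN/(α+2) · y^{Nα/2}`, with equality for the optimizer `Q`,
and the Pohozaev identities make `f(y_Q) = E(Q) M(Q)^σ` positive. As `Nα/2 > 2`, `f(y)/y²` decreases,
so `y ≤ y_Q` gives `y² / y_Q² ≤ f(y) / f(y_Q) ≤ E(u) M(u)^σ / (E(Q) M(Q)^σ)`.
-/

open MeasureTheory Filter

noncomputable section

abbrev Rn (N : ℕ) : Type := EuclideanSpace ℝ (Fin N)

/-- pointwise squared norm of the gradient of a complex-valued function on `ℝ^N` -/
def gradNormSq (N : ℕ) (u : Rn N → ℂ) (x : Rn N) : ℝ :=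
  ∑ i : Fin N, ‖fderiv ℝ u x (EuclideanSpace.single i 1)‖ ^ 2

/-- the `L²` norm of the gradient, `‖∇u‖_{L²}` -/
def gradL2 (N : ℕ) (u : Rn N → ℂ) : ℝ := Real.sqrt (∫ x, gradNormSq N u x)

/-- the mass `M(u) = ∫ |u|²` -/
def massM (N : ℕ) (u : Rn N → ℂ) : ℝ := ∫ x, ‖u x‖ ^ 2

/-- the `L²` norm -/
def l2norm (N : ℕ) (u : Rn N → ℂ) : ℝ := Real.sqrt (massM N u)

/-- the `L^p` norm -/
def lpnorm (N : ℕ) (p : ℝ) (u : Rn N → ℂ) : ℝ := (∫ x, ‖u x‖ ^ p) ^ (1 / p)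

/-- the energy `E(u) = ½∫|∇u|² − (1/(α+2))∫|u|^{α+2}` -/
def energyE (N : ℕ) (α : ℝ) (u : Rn N → ℂ) : ℝ :=
  (1 / 2) * (∫ x, gradNormSq N u x) - (1 / (α + 2)) * ∫ x, ‖u x‖ ^ (α + 2)

/-- membership in `H¹(ℝ^N;ℂ)` (with the finiteness of the `L^{α+2}` norm,
which follows from the Sobolev embedding) -/
def InH1 (N : ℕ) (α : ℝ) (u : Rn N → ℂ) : Prop :=
  Differentiable ℝ u ∧ Integrable (fun x => ‖u x‖ ^ 2) ∧
    Integrable (gradNormSq N u) ∧ Integrable fun x : Rn N => ‖u x‖ ^ (α + 2)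

section Norms

variable {N : ℕ} (u : Rn N → ℂ)

lemma massM_nonneg : 0 ≤ massM N u :=
  integral_nonneg fun _ => by positivity

lemma l2norm_rpow (e : ℝ) : l2norm N u ^ e = massM N u ^ (e / 2) := by
  rw [l2norm, Real.sqrt_eq_rpow, ← Real.rpow_mul (massM_nonneg u)]
  ring_nf

lemma lpnorm_rpow_self {p : ℝ} (hp : p ≠ 0) : lpnorm N p u ^ p = ∫ x, ‖u x‖ ^ p := by
  have hint : 0 ≤ ∫ x, ‖u x‖ ^ p := integral_nonneg fun _ => Real.rpow_nonneg (norm_nonneg _) _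
  rw [lpnorm, ← Real.rpow_mul hint, one_div_mul_cancel hp, Real.rpow_one]

lemma energyE_eq {α : ℝ} (hα : α + 2 ≠ 0) :
    energyE N α u = gradL2 N u ^ 2 / 2 - lpnorm N (α + 2) u ^ (α + 2) / (α + 2) := by
  have hgrad : 0 ≤ ∫ x, gradNormSq N u x :=
    integral_nonneg fun _ => Finset.sum_nonneg fun _ _ => sq_nonneg _
  rw [energyE, gradL2, Real.sq_sqrt hgrad, lpnorm_rpow_self u hα]
  ring

end Norms

lemma four_sub_mul_pos {N : ℕ} {α : ℝ} (hα : 0 < α) (hα₂ : 3 ≤ N → α < 4 / ((N : ℝ) - 2)) :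
    0 < 4 - ((N : ℝ) - 2) * α := by
  rcases le_or_gt N 2 with hN | hN
  · have : (N : ℝ) ≤ 2 := by exact_mod_cast hN
    nlinarith
  · have hN' : (2 : ℝ) < N := by exact_mod_cast hN
    have := (lt_div_iff₀ (by linarith)).mp (hα₂ hN)
    linarith

/-- The lower bound `y ↦ y²/2 - c yᵠ` for the (scaled) energy provided by the
Gagliardo–Nirenberg inequality, with `c = C_GN / (α + 2)` and `q = Nα/2`. -/
def gnEnergyBound (c q y : ℝ) : ℝ := y ^ 2 / 2 - c * y ^ q

/-- `y ↦ gnEnergyBound c q y / y²` is antitone on `[0, ∞)`. -/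
lemma gnEnergyBound_mul_sq_le {c q y K : ℝ} (hc : 0 ≤ c) (hq : 2 ≤ q) (hy : 0 ≤ y)
    (hyK : y ≤ K) : gnEnergyBound c q K * y ^ 2 ≤ gnEnergyBound c q y * K ^ 2 := by
  have hsplit : ∀ x : ℝ, 0 ≤ x → x ^ q = x ^ (q - 2) * x ^ 2 := fun x hx => by
    rw [← Real.rpow_two, ← Real.rpow_add' hx (by linarith), sub_add_cancel]
  have hpow : y ^ (q - 2) ≤ K ^ (q - 2) := Real.rpow_le_rpow hy hyK (by linarith)
  have := mul_le_mul_of_nonneg_left hpow (by positivity : 0 ≤ c * y ^ 2 * K ^ 2)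
  rw [gnEnergyBound, gnEnergyBound, hsplit y hy, hsplit K (hy.trans hyK)]
  linarith

lemma gnEnergyBound_scaling {β γ σ : ℝ} (hβ : 0 < β) (hσ : 0 < σ) (hσγ : σ * γ = β + 4 * σ)
    (c : ℝ) {a m : ℝ} (ha : 0 ≤ a) (hm : 0 ≤ m) :
    gnEnergyBound c (γ / 2) (a * m ^ (σ / 2)) =
      (a ^ 2 / 2 - c * (m ^ (β / 4) * a ^ (γ / 2))) * m ^ σ := by
  have hsq : (m ^ (σ / 2)) ^ 2 = m ^ σ := by
    rw [← Real.rpow_two, ← Real.rpow_mul hm, div_mul_cancel₀ σ two_ne_zero]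
  have hpow : (m ^ (σ / 2)) ^ (γ / 2) = m ^ (β / 4) * m ^ σ := by
    rw [← Real.rpow_mul hm, ← Real.rpow_add' hm (by positivity)]
    congr 1
    linarith
  rw [gnEnergyBound, Real.mul_rpow ha (Real.rpow_nonneg hm _), mul_pow, hsq, hpow]
  ring

lemma le_rpow_half_mul_of_mul_sq_le {y K a b : ℝ} (hy : 0 ≤ y) (hK : 0 < K) (hb : 0 < b)
    (h : b * y ^ 2 ≤ a * K ^ 2) : y ≤ (a / b) ^ (1 / 2 : ℝ) * K := by
  have h' : y ^ 2 ≤ a / b * K ^ 2 := by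
    rw [div_mul_eq_mul_div, le_div_iff₀ hb]
    linarith
  have hab : 0 ≤ a / b := nonneg_of_mul_nonneg_left ((sq_nonneg y).trans h') (by positivity)
  calc y = √(y ^ 2) := (Real.sqrt_sq hy).symm
    _ ≤ √(a / b * K ^ 2) := Real.sqrt_le_sqrt h'
    _ = (a / b) ^ (1 / 2 : ℝ) * K := by
      rw [Real.sqrt_mul hab, Real.sqrt_sq hK.le, Real.sqrt_eq_rpow]

lemma energy_eq_of_pohozaev {β γ t a m P : ℝ} (hβ : β ≠ 0) (hγ : γ ≠ 0) (ht : t ≠ 0)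
    (h₁ : m = β / γ * a ^ 2) (h₂ : m = β / (2 * t) * P) :
    a ^ 2 / 2 - P / t = (γ - 4) / (2 * β) * m := by
  have ha : a ^ 2 = γ / β * m := by
    rw [h₁]
    field_simp
  have hP : P = 2 * t / β * m := by
    rw [h₂]
    field_simp
  rw [ha, hP]
  field_simp
  ring

/-- Here `a = ‖∇u‖`, `m = M(u)`, `P = ‖u‖_{L^t}^t`, likewise for `Q`, and
`β = 4 - (N-2)α`, `γ = Nα`, `t = α + 2`. -/
lemma scaled_gradient_le_of_gagliardoNirenberg {β γ σ t C : ℝ} (hβ : 0 < β) (hγ : 4 < γ)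
    (hσ : σ = β / (γ - 4)) (ht : 0 < t)
    {aQ mQ PQ : ℝ} (haQ : 0 ≤ aQ) (hmQ : 0 < mQ)
    (hC : C = PQ / (mQ ^ (β / 4) * aQ ^ (γ / 2)))
    (hPoho₁ : mQ = β / γ * aQ ^ 2) (hPoho₂ : mQ = β / (2 * t) * PQ)
    {a m P : ℝ} (ha : 0 ≤ a) (hm : 0 ≤ m) (hGN : P ≤ C * m ^ (β / 4) * a ^ (γ / 2))
    (hle : a * m ^ (σ / 2) ≤ aQ * mQ ^ (σ / 2)) :
    a * m ^ (σ / 2) ≤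
      ((a ^ 2 / 2 - P / t) * m ^ σ / ((aQ ^ 2 / 2 - PQ / t) * mQ ^ σ)) ^ (1 / 2 : ℝ) *
        (aQ * mQ ^ (σ / 2)) := by
  have hσpos : 0 < σ := hσ ▸ div_pos hβ (by linarith)
  have hσγ : σ * γ = β + 4 * σ := by
    have : γ - 4 ≠ 0 := by linarith
    rw [hσ]
    field_simp
    ring
  have haQpos : 0 < aQ := by
    have : 0 < aQ ^ 2 := pos_of_mul_pos_right (hPoho₁ ▸ hmQ) (by positivity)
    exact haQ.lt_of_ne (by rintro rfl; simp at this)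
  have hPQpos : 0 < PQ := pos_of_mul_pos_right (hPoho₂ ▸ hmQ) (by positivity)
  have hPQ_eq : PQ = C * (mQ ^ (β / 4) * aQ ^ (γ / 2)) := by
    rw [hC, div_mul_cancel₀]
    positivity
  have hC0 : 0 ≤ C := by
    rw [hC]
    positivity
  have hEQ : 0 < (aQ ^ 2 / 2 - PQ / t) * mQ ^ σ := by
    rw [energy_eq_of_pohozaev hβ.ne' (by linarith) ht.ne' hPoho₁ hPoho₂]
    have : 0 < γ - 4 := by linarith
    positivity
  have hfK : gnEnergyBound (C / t) (γ / 2) (aQ * mQ ^ (σ / 2)) =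
      (aQ ^ 2 / 2 - PQ / t) * mQ ^ σ := by
    rw [gnEnergyBound_scaling hβ hσpos hσγ (C / t) haQ hmQ.le, hPQ_eq]
    ring
  have hmono := gnEnergyBound_mul_sq_le (c := C / t) (q := γ / 2) (by positivity) (by linarith)
    (by positivity) hle
  have hEu : gnEnergyBound (C / t) (γ / 2) (a * m ^ (σ / 2)) ≤ (a ^ 2 / 2 - P / t) * m ^ σ := by
    rw [gnEnergyBound_scaling hβ hσpos hσγ (C / t) ha hm]
    gcongr
    rw [div_mul_eq_mul_div, ← mul_assoc]
    gcongr
  rw [hfK] at hmono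
  exact le_rpow_half_mul_of_mul_sq_le (by positivity) (by positivity) hEQ
    (hmono.trans (by gcongr))

theorem gradient_controlled_by_energy_general
    (N : ℕ) (hN : 1 ≤ N) (α : ℝ) (hα₁ : 4 / (N : ℝ) < α)
    (hα₂ : 3 ≤ N → α < 4 / ((N : ℝ) - 2))
    (σ : ℝ) (hσ : σ = (4 - ((N : ℝ) - 2) * α) / ((N : ℝ) * α - 4))
    (Q : Rn N → ℂ) (hQpos : 0 < massM N Q)
    (CGN : ℝ)
    (hCGN : CGN = lpnorm N (α + 2) Q ^ (α + 2) /
      (l2norm N Q ^ ((4 - ((N : ℝ) - 2) * α) / 2) * gradL2 N Q ^ ((N : ℝ) * α / 2)))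
    (hGN : ∀ f : Rn N → ℂ, InH1 N α f →
      lpnorm N (α + 2) f ^ (α + 2) ≤
        CGN * l2norm N f ^ ((4 - ((N : ℝ) - 2) * α) / 2) * gradL2 N f ^ ((N : ℝ) * α / 2))
    (hPoho₁ : massM N Q = ((4 - ((N : ℝ) - 2) * α) / ((N : ℝ) * α)) * gradL2 N Q ^ 2)
    (hPoho₂ : massM N Q =
      ((4 - ((N : ℝ) - 2) * α) / (2 * (α + 2))) * lpnorm N (α + 2) Q ^ (α + 2))
    (u : Rn N → ℂ) (hu : InH1 N α u)
    (hle : gradL2 N u * l2norm N u ^ σ ≤ gradL2 N Q * l2norm N Q ^ σ) :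
    gradL2 N u * l2norm N u ^ σ ≤
      (energyE N α u * massM N u ^ σ / (energyE N α Q * massM N Q ^ σ)) ^ ((1 : ℝ) / 2) *
        (gradL2 N Q * l2norm N Q ^ σ) := by
  have hN' : (0 : ℝ) < N := by exact_mod_cast hN
  have hα : 0 < α := (div_pos four_pos hN').trans hα₁
  have hl2 : ∀ f : Rn N → ℂ, l2norm N f ^ ((4 - ((N : ℝ) - 2) * α) / 2) =
      massM N f ^ ((4 - ((N : ℝ) - 2) * α) / 4) := fun f => by
    rw [l2norm_rpow]
    ring_nf
  have hGNu := hGN u hu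
  rw [hl2] at hGNu hCGN
  rw [l2norm_rpow, l2norm_rpow] at hle ⊢
  rw [energyE_eq u (by linarith), energyE_eq Q (by linarith)]
  exact scaled_gradient_le_of_gagliardoNirenberg (four_sub_mul_pos hα hα₂)
    ((div_lt_iff₀' hN').mp hα₁) hσ (by linarith) (Real.sqrt_nonneg _) hQpos hCGN hPoho₁ hPoho₂
    (Real.sqrt_nonneg _) (massM_nonneg u) hGNu hle

theorem gradient_controlled_by_energy
    (N : ℕ) (hN : 1 ≤ N) (α : ℝ) (hα₁ : 4 / (N : ℝ) < α)
    (hα₂ : 3 ≤ N → α < 4 / ((N : ℝ) - 2))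
    (σ : ℝ) (hσ : σ = (4 - ((N : ℝ) - 2) * α) / ((N : ℝ) * α - 4))
    (Q : Rn N → ℂ) (hQH1 : InH1 N α Q) (hQpos : 0 < massM N Q)
    (CGN : ℝ)
    (hCGN : CGN = lpnorm N (α + 2) Q ^ (α + 2) /
      (l2norm N Q ^ ((4 - ((N : ℝ) - 2) * α) / 2) * gradL2 N Q ^ ((N : ℝ) * α / 2)))
    (hGN : ∀ f : Rn N → ℂ, InH1 N α f →
      lpnorm N (α + 2) f ^ (α + 2) ≤
        CGN * l2norm N f ^ ((4 - ((N : ℝ) - 2) * α) / 2) * gradL2 N f ^ ((N : ℝ) * α / 2))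
    (hPoho₁ : massM N Q = ((4 - ((N : ℝ) - 2) * α) / ((N : ℝ) * α)) * gradL2 N Q ^ 2)
    (hPoho₂ : massM N Q =
      ((4 - ((N : ℝ) - 2) * α) / (2 * (α + 2))) * lpnorm N (α + 2) Q ^ (α + 2))
    (u : Rn N → ℂ) (hu : InH1 N α u)
    (hle : gradL2 N u * l2norm N u ^ σ ≤ gradL2 N Q * l2norm N Q ^ σ) :
    gradL2 N u * l2norm N u ^ σ ≤
      (energyE N α u * massM N u ^ σ / (energyE N α Q * massM N Q ^ σ)) ^ ((1 : ℝ) / 2) *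
        (gradL2 N Q * l2norm N Q ^ σ) :=
  gradient_controlled_by_energy_general N hN α hα₁ hα₂ σ hσ Q hQpos CGN hCGN hGN hPoho₁ hPoho₂ u hu
    hle
end
end

section
/- For every 0 < ω < 1, the set K_ω = { u ∈ H¹(ℝ^N;ℂ) : E(u) M(u)^σ ≤ ω E(Q) M(Q)^σ and ‖∇u‖_{L²} ‖u‖_{L²}^σ < ‖∇Q‖_{L²} ‖Q‖_{L²}^σ } is a closed subset of H¹(ℝ^N) in the H¹-norm topology; moreover every u ∈ K_ω satisfies ‖∇u‖_{L²} ‖u‖_{L²}^σ ≤ ω^{1/2} ‖∇Q‖_{L²} ‖Q‖_{L²}^σ. -/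
open MeasureTheory Filter

noncomputable section

/-!
Write `s = Nα/2`, `a = (4 - (N-2)α)/2`, so that `σ (s - 2) = a`, and `y(u) = ‖∇u‖ ‖u‖^σ`.
The Pohozaev identities identify the Gagliardo–Nirenberg constant as
`C_GN = (α+2) / (s y(Q)^(s-2))`, so Gagliardo–Nirenberg gives
`E(u) M(u)^σ ≥ y(Q)² φ(y(u)/y(Q))` with `φ t = t²/2 - t^s/s` (`gnProfile s`), with equality
for `u = Q`.
As `φ` increases on `[0, 1]` and `φ(√ω) > ω φ(1)`, the two conditions defining `K_ω` force
`y(u) ≤ √ω y(Q)`. For closedness, `M`, `‖∇·‖²` and (by Gagliardo–Nirenberg applied to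
differences) `‖·‖_{α+2}^{α+2}` are continuous along `H¹`-convergent sequences, so the energy
condition passes to the limit, and the strict condition survives because `√ω y(Q) < y(Q)`.
-/

open Topology

section LpConvergence

variable {X E : Type*} [MeasurableSpace X] {μ : Measure X} [NormedAddCommGroup E] {p : ℝ}

theorem memLp_ofReal_iff_integrable_norm_rpow (hp : 0 < p) {f : X → E}
    (hf : AEStronglyMeasurable f μ) :
    MemLp f (ENNReal.ofReal p) μ ↔ Integrable (fun x => ‖f x‖ ^ p) μ := by
  rw [← integrable_norm_rpow_iff hf (by simpa using hp) ENNReal.ofReal_ne_top,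
    ENNReal.toReal_ofReal hp.le]

theorem MeasureTheory.MemLp.norm_toLp_eq_integral_norm_rpow (hp : 0 < p) {f : X → E}
    (hf : MemLp f (ENNReal.ofReal p) μ) :
    ‖hf.toLp f‖ = (∫ x, ‖f x‖ ^ p ∂μ) ^ p⁻¹ := by
  rw [Lp.norm_toLp, hf.eLpNorm_eq_integral_rpow_norm (by simpa using hp) ENNReal.ofReal_ne_top,
    ENNReal.toReal_ofReal hp.le, ENNReal.toReal_ofReal (by positivity)]

theorem MeasureTheory.MemLp.integrable_norm_rpow_ofReal (hp : 0 < p) {f : X → E}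
    (hf : MemLp f (ENNReal.ofReal p) μ) : Integrable (fun x => ‖f x‖ ^ p) μ :=
  (memLp_ofReal_iff_integrable_norm_rpow hp hf.1).1 hf

theorem tendsto_integral_norm_rpow_of_tendsto_integral_norm_sub_rpow (hp : 1 ≤ p)
    {f : ℕ → X → E} {g : X → E}
    (hf : ∀ n, MemLp (f n) (ENNReal.ofReal p) μ) (hg : MemLp g (ENNReal.ofReal p) μ)
    (h : Tendsto (fun n => ∫ x, ‖f n x - g x‖ ^ p ∂μ) atTop (𝓝 0)) :
    Tendsto (fun n => ∫ x, ‖f n x‖ ^ p ∂μ) atTop (𝓝 (∫ x, ‖g x‖ ^ p ∂μ)) := by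
  have : Fact (1 ≤ ENNReal.ofReal p) := ⟨by simpa using hp⟩
  have hp0 : 0 < p := by linarith
  have hLp : Tendsto (fun n => (hf n).toLp (f n)) atTop (𝓝 (hg.toLp g)) := by
    rw [tendsto_iff_norm_sub_tendsto_zero]
    have h' := h.rpow_const (p := p⁻¹) (Or.inr (by positivity))
    rw [Real.zero_rpow (inv_ne_zero hp0.ne')] at h'
    refine h'.congr fun n => ?_
    rw [← MemLp.toLp_sub, MemLp.norm_toLp_eq_integral_norm_rpow hp0]
    rfl
  have key := hLp.norm.rpow_const (p := p) (Or.inr hp0.le)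
  have hpow : ∀ {h : X → E}, 0 ≤ ∫ x, ‖h x‖ ^ p ∂μ := integral_nonneg fun _ => by positivity
  simpa only [MemLp.norm_toLp_eq_integral_norm_rpow hp0, ← Real.rpow_mul hpow,
    inv_mul_cancel₀ hp0.ne', Real.rpow_one] using key

end LpConvergence

def gnProfile (s t : ℝ) : ℝ := t ^ 2 / 2 - t ^ s / s

theorem gnProfile_strictMonoOn {s : ℝ} (hs : 2 < s) :
    StrictMonoOn (gnProfile s) (Set.Icc 0 1) := by
  have hs0 : 0 < s := by linarith
  have hderiv : ∀ t, 0 < t → HasDerivAt (gnProfile s) (t - t ^ (s - 1)) t := fun t ht => by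
    refine (((hasDerivAt_pow 2 t).div_const 2).sub
      ((Real.hasDerivAt_rpow_const (p := s) (Or.inl ht.ne')).div_const s)).congr_deriv ?_
    field_simp
    ring
  refine strictMonoOn_of_deriv_pos (convex_Icc 0 1) ?_ fun t ht => ?_
  · exact (((continuous_pow 2).div_const 2).sub
      ((Real.continuous_rpow_const hs0.le).div_const s)).continuousOn
  · rw [interior_Icc] at ht
    rw [(hderiv t ht.1).deriv, sub_pos, show s - 1 = (s - 2) + 1 by ring,
      Real.rpow_add ht.1, Real.rpow_one]
    have := Real.rpow_lt_one ht.1.le ht.2 (by linarith : 0 < s - 2)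
    nlinarith [ht.1]

theorem mul_gnProfile_one_lt_gnProfile_sqrt {s ω : ℝ} (hs : 2 < s) (hω₀ : 0 < ω) (hω₁ : ω < 1) :
    ω * gnProfile s 1 < gnProfile s √ω := by
  have hpow : √ω ^ s < ω := by
    rw [Real.sqrt_eq_rpow, ← Real.rpow_mul hω₀.le]
    exact Real.rpow_lt_self_of_lt_one hω₀ hω₁ (by linarith)
  have hsq : √ω ^ (2 : ℕ) = ω := Real.sq_sqrt hω₀.le
  simp only [gnProfile, Real.one_rpow, one_pow, hsq]
  have : √ω ^ s / s < ω / s := div_lt_div_of_pos_right hpow (by linarith)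
  linarith [show ω * (1 / 2 - 1 / s) = ω / 2 - ω / s by ring]

theorem le_sqrt_of_gnProfile_le {s ω t : ℝ} (hs : 2 < s) (hω₀ : 0 < ω) (hω₁ : ω < 1)
    (ht : t ≤ 1) (h : gnProfile s t ≤ ω * gnProfile s 1) : t ≤ √ω := by
  by_contra! hlt
  have hsqrt : √ω ≤ 1 := Real.sqrt_le_one.mpr hω₁.le
  have := gnProfile_strictMonoOn hs ⟨Real.sqrt_nonneg ω, hsqrt⟩
    ⟨(Real.sqrt_nonneg ω).trans hlt.le, ht⟩ hlt
  linarith [mul_gnProfile_one_lt_gnProfile_sqrt hs hω₀ hω₁]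

section GroundStateAlgebra

variable {a s p σ g m L : ℝ}

theorem Real.rpow_eq_rpow_sub_two_mul_sq (hg : 0 < g) : g ^ s = g ^ (s - 2) * g ^ 2 := by
  rw [← Real.rpow_two, ← Real.rpow_add hg, sub_add_cancel]

theorem gn_const_eq_of_pohozaev (hs : 0 < s) (ha : 0 < a) (hσ : σ * (s - 2) = a) (hg : 0 < g)
    (hm : 0 < m) (h₁ : m ^ 2 = a / s * g ^ 2) (h₂ : m ^ 2 = a / p * L) :
    L / (m ^ a * g ^ s) = p / (s * (g * m ^ σ) ^ (s - 2)) := by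
  have hp : p ≠ 0 := by
    rintro rfl
    rw [div_zero, zero_mul] at h₂
    exact (pow_pos hm 2).ne' h₂
  have hL : L = p / a * m ^ 2 := by
    rw [h₂]; field_simp
  have hg2 : g ^ 2 = s / a * m ^ 2 := by
    rw [h₁]; field_simp
  have hmpos := Real.rpow_pos_of_pos hm a
  have hgpos := Real.rpow_pos_of_pos hg (s - 2)
  rw [Real.mul_rpow hg.le (by positivity), ← Real.rpow_mul hm.le, hσ,
    Real.rpow_eq_rpow_sub_two_mul_sq hg, hL, hg2]
  field_simp

theorem energy_eq_of_pohozaev_s7 (hs : s ≠ 0) (ha : a ≠ 0) (hp : p ≠ 0)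
    (h₁ : m ^ 2 = a / s * g ^ 2) (h₂ : m ^ 2 = a / p * L) :
    (g ^ 2 / 2 - L / p) * (m ^ σ) ^ 2 = (g * m ^ σ) ^ 2 * gnProfile s 1 := by
  have hL : L / p = m ^ 2 / a := by
    rw [h₂]; field_simp
  have hg2 : g ^ 2 = s / a * m ^ 2 := by
    rw [h₁]; field_simp
  rw [gnProfile, mul_pow, one_pow, Real.one_rpow, hL, hg2]
  field_simp

theorem sq_mul_gnProfile_le_of_gn {yQ : ℝ} (hσ : σ * (s - 2) = a) (hp : 0 < p)
    (hs : 0 < s) (hσ₀ : 0 < σ) (hyQ : 0 < yQ) (hg : 0 ≤ g) (hm : 0 ≤ m)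
    (hL : L ≤ p / (s * yQ ^ (s - 2)) * m ^ a * g ^ s) :
    yQ ^ 2 * gnProfile s (g * m ^ σ / yQ) ≤ (g ^ 2 / 2 - L / p) * (m ^ σ) ^ 2 := by
  set y := g * m ^ σ with hy
  have hy0 : 0 ≤ y := by positivity
  have hys : y ^ s = m ^ a * g ^ s * (m ^ σ) ^ 2 := by
    rw [hy, Real.mul_rpow hg (by positivity), ← Real.rpow_mul hm, ← Real.rpow_natCast,
      ← Real.rpow_mul hm, show σ * s = a + σ * (2 : ℕ) by push_cast; linarith,
      Real.rpow_add' hm (by push_cast; nlinarith)]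
    ring
  have hprofile : yQ ^ 2 * gnProfile s (y / yQ) = y ^ 2 / 2 - y ^ s / (s * yQ ^ (s - 2)) := by
    rw [gnProfile, Real.div_rpow hy0 hyQ.le, Real.rpow_eq_rpow_sub_two_mul_sq hyQ]
    have := Real.rpow_pos_of_pos hyQ (s - 2)
    field_simp
  have hLp : L / p * (m ^ σ) ^ 2 ≤ y ^ s / (s * yQ ^ (s - 2)) := by
    calc L / p * (m ^ σ) ^ 2 ≤ (p / (s * yQ ^ (s - 2)) * m ^ a * g ^ s) / p * (m ^ σ) ^ 2 := by
          gcongr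
      _ = y ^ s / (s * yQ ^ (s - 2)) := by
          rw [hys]; field_simp
  rw [hprofile, hy, mul_pow]
  linarith

end GroundStateAlgebra

section SobolevFunctionals

variable {N : ℕ} {α : ℝ}

def gradVec (u : Rn N → ℂ) (x : Rn N) : EuclideanSpace ℂ (Fin N) :=
  WithLp.toLp 2 fun i => fderiv ℝ u x (EuclideanSpace.single i 1)

theorem norm_gradVec_sq (u : Rn N → ℂ) (x : Rn N) : ‖gradVec u x‖ ^ 2 = gradNormSq N u x :=
  EuclideanSpace.norm_sq_eq _

theorem aestronglyMeasurable_gradVec (u : Rn N → ℂ) :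
    AEStronglyMeasurable (gradVec u) (volume : Measure (Rn N)) :=
  ((WithLp.measurable_toLp 2 _).comp
    (measurable_pi_lambda _ fun _ => measurable_fderiv_apply_const ℝ u _)).aestronglyMeasurable

theorem gradVec_sub {u v : Rn N → ℂ} (hu : Differentiable ℝ u) (hv : Differentiable ℝ v)
    (x : Rn N) : gradVec (fun y => v y - u y) x = gradVec v x - gradVec u x := by
  ext i
  simp [gradVec, fderiv_fun_sub (hv x) (hu x)]

theorem gradNormSq_nonneg (u : Rn N → ℂ) (x : Rn N) : 0 ≤ gradNormSq N u x :=
  Finset.sum_nonneg fun _ _ => sq_nonneg _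

theorem gradL2_nonneg (u : Rn N → ℂ) : 0 ≤ gradL2 N u := Real.sqrt_nonneg _

theorem l2norm_nonneg (u : Rn N → ℂ) : 0 ≤ l2norm N u := Real.sqrt_nonneg _

theorem gradL2_sq (u : Rn N → ℂ) : gradL2 N u ^ 2 = ∫ x, gradNormSq N u x :=
  Real.sq_sqrt (integral_nonneg (gradNormSq_nonneg u))

theorem l2norm_sq (u : Rn N → ℂ) : l2norm N u ^ 2 = massM N u :=
  Real.sq_sqrt (integral_nonneg fun _ => sq_nonneg _)

theorem massM_rpow (u : Rn N → ℂ) (σ : ℝ) : massM N u ^ σ = (l2norm N u ^ σ) ^ 2 := by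
  rw [← l2norm_sq]
  exact (Real.rpow_pow_comm (Real.sqrt_nonneg _) σ 2).symm

theorem lpnorm_rpow {p : ℝ} (hp : p ≠ 0) (u : Rn N → ℂ) : lpnorm N p u ^ p = ∫ x, ‖u x‖ ^ p := by
  rw [lpnorm, ← Real.rpow_mul (integral_nonneg fun _ => by positivity), one_div,
    inv_mul_cancel₀ hp, Real.rpow_one]

theorem energyE_mul_massM_rpow (hα : α + 2 ≠ 0) (u : Rn N → ℂ) (σ : ℝ) :
    energyE N α u * massM N u ^ σ =
      (gradL2 N u ^ 2 / 2 - lpnorm N (α + 2) u ^ (α + 2) / (α + 2)) * (l2norm N u ^ σ) ^ 2 := by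
  rw [energyE, massM_rpow, gradL2_sq, lpnorm_rpow hα]
  ring

theorem gradL2_mul_l2norm_rpow_le_of_energyE_le {s a σ ω yQ : ℝ} {u : Rn N → ℂ}
    (hs : 2 < s) (hα : 0 < α + 2) (hσ : σ * (s - 2) = a) (hσ₀ : 0 < σ) (hyQ : 0 < yQ)
    (hω₀ : 0 < ω) (hω₁ : ω < 1)
    (hGN : lpnorm N (α + 2) u ^ (α + 2) ≤
      (α + 2) / (s * yQ ^ (s - 2)) * l2norm N u ^ a * gradL2 N u ^ s)
    (hE : energyE N α u * massM N u ^ σ ≤ ω * (yQ ^ 2 * gnProfile s 1))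
    (hlt : gradL2 N u * l2norm N u ^ σ < yQ) :
    gradL2 N u * l2norm N u ^ σ ≤ √ω * yQ := by
  have hlow := sq_mul_gnProfile_le_of_gn hσ hα (by linarith) hσ₀ hyQ
    (gradL2_nonneg u) (l2norm_nonneg u) hGN
  rw [← energyE_mul_massM_rpow hα.ne'] at hlow
  have hprofile : gnProfile s (gradL2 N u * l2norm N u ^ σ / yQ) ≤ ω * gnProfile s 1 := by
    refine le_of_mul_le_mul_left ?_ (pow_pos hyQ 2)
    linarith
  rw [← div_le_iff₀ hyQ]
  exact le_sqrt_of_gnProfile_le hs hω₀ hω₁ ((div_le_one hyQ).2 hlt.le) hprofile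

namespace InH1

variable {u v : Rn N → ℂ}

theorem aestronglyMeasurable (hu : InH1 N α u) :
    AEStronglyMeasurable u (volume : Measure (Rn N)) :=
  hu.1.continuous.aestronglyMeasurable

theorem memLp_two (hu : InH1 N α u) : MemLp u (ENNReal.ofReal 2) :=
  (memLp_ofReal_iff_integrable_norm_rpow two_pos hu.aestronglyMeasurable).2 <| by
    simpa only [Real.rpow_two] using hu.2.1

theorem memLp_gradVec (hu : InH1 N α u) : MemLp (gradVec u) (ENNReal.ofReal 2) :=
  (memLp_ofReal_iff_integrable_norm_rpow two_pos (aestronglyMeasurable_gradVec u)).2 <| by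
    simpa only [Real.rpow_two, norm_gradVec_sq] using hu.2.2.1

theorem memLp_rpow (hα : 0 < α + 2) (hu : InH1 N α u) : MemLp u (ENNReal.ofReal (α + 2)) :=
  (memLp_ofReal_iff_integrable_norm_rpow hα hu.aestronglyMeasurable).2 hu.2.2.2

theorem sub (hα : 0 < α + 2) (hv : InH1 N α v) (hu : InH1 N α u) :
    InH1 N α (fun x => v x - u x) := by
  refine ⟨hv.1.sub hu.1, ?_, ?_, ?_⟩
  · simpa only [Real.rpow_two, Pi.sub_apply] using
      (hv.memLp_two.sub hu.memLp_two).integrable_norm_rpow_ofReal two_pos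
  · simpa only [Real.rpow_two, Pi.sub_apply, ← gradVec_sub hu.1 hv.1, norm_gradVec_sq] using
      (hv.memLp_gradVec.sub hu.memLp_gradVec).integrable_norm_rpow_ofReal two_pos
  · exact ((hv.memLp_rpow hα).sub (hu.memLp_rpow hα)).integrable_norm_rpow_ofReal hα

end InH1

def h1DistSq (w u : Rn N → ℂ) : ℝ :=
  massM N (fun x => w x - u x) + ∫ x, gradNormSq N (fun y => w y - u y) x

variable {v : ℕ → Rn N → ℂ} {u : Rn N → ℂ}

theorem tendsto_massM_sub (h : Tendsto (fun n => h1DistSq (v n) u) atTop (𝓝 0)) :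
    Tendsto (fun n => massM N (fun x => v n x - u x)) atTop (𝓝 0) :=
  squeeze_zero (fun _ => integral_nonneg fun _ => sq_nonneg _)
    (fun _ => le_add_of_nonneg_right <| integral_nonneg (gradNormSq_nonneg _)) h

theorem tendsto_integral_gradNormSq_sub (h : Tendsto (fun n => h1DistSq (v n) u) atTop (𝓝 0)) :
    Tendsto (fun n => ∫ x, gradNormSq N (fun y => v n y - u y) x) atTop (𝓝 0) :=
  squeeze_zero (fun _ => integral_nonneg (gradNormSq_nonneg _))
    (fun _ => le_add_of_nonneg_left <| integral_nonneg fun _ => sq_nonneg _) h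

theorem tendsto_massM (hv : ∀ n, InH1 N α (v n)) (hu : InH1 N α u)
    (h : Tendsto (fun n => h1DistSq (v n) u) atTop (𝓝 0)) :
    Tendsto (fun n => massM N (v n)) atTop (𝓝 (massM N u)) := by
  simpa only [massM, Real.rpow_two] using
    tendsto_integral_norm_rpow_of_tendsto_integral_norm_sub_rpow one_le_two
      (fun n => (hv n).memLp_two) hu.memLp_two
      (by simpa only [massM, Real.rpow_two] using tendsto_massM_sub h)

theorem tendsto_integral_gradNormSq (hv : ∀ n, InH1 N α (v n)) (hu : InH1 N α u)
    (h : Tendsto (fun n => h1DistSq (v n) u) atTop (𝓝 0)) :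
    Tendsto (fun n => ∫ x, gradNormSq N (v n) x) atTop (𝓝 (∫ x, gradNormSq N u x)) := by
  have hsub := tendsto_integral_gradNormSq_sub h
  simp only [← norm_gradVec_sq, ← Real.rpow_two] at hsub ⊢
  refine tendsto_integral_norm_rpow_of_tendsto_integral_norm_sub_rpow one_le_two
      (fun n => (hv n).memLp_gradVec) hu.memLp_gradVec (hsub.congr fun n => ?_)
  simp only [gradVec_sub hu.1 (hv n).1]

theorem tendsto_integral_norm_rpow {C a b : ℝ} (hα : -1 ≤ α) (ha : 0 < a) (hb : 0 < b)
    (hGN : ∀ f, InH1 N α f → lpnorm N (α + 2) f ^ (α + 2) ≤ C * l2norm N f ^ a * gradL2 N f ^ b)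
    (hv : ∀ n, InH1 N α (v n)) (hu : InH1 N α u)
    (h : Tendsto (fun n => h1DistSq (v n) u) atTop (𝓝 0)) :
    Tendsto (fun n => ∫ x, ‖v n x‖ ^ (α + 2)) atTop (𝓝 (∫ x, ‖u x‖ ^ (α + 2))) := by
  have hα₂ : 0 < α + 2 := by linarith
  refine tendsto_integral_norm_rpow_of_tendsto_integral_norm_sub_rpow (by linarith)
    (fun n => (hv n).memLp_rpow hα₂) (hu.memLp_rpow hα₂) ?_
  have hbound := ((((Real.continuous_sqrt.tendsto 0).comp (tendsto_massM_sub h)).rpow_const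
    (Or.inr ha.le)).const_mul C).mul (((Real.continuous_sqrt.tendsto 0).comp
      (tendsto_integral_gradNormSq_sub h)).rpow_const (Or.inr hb.le))
  rw [Real.sqrt_zero, Real.zero_rpow ha.ne', Real.zero_rpow hb.ne', mul_zero] at hbound
  refine squeeze_zero (fun n => integral_nonneg fun _ => by positivity) (fun n => ?_) hbound
  rw [← lpnorm_rpow hα₂.ne']
  exact hGN _ ((hv n).sub hα₂ hu)

theorem tendsto_gradL2_mul_l2norm_rpow {σ : ℝ} (hσ : 0 ≤ σ) (hv : ∀ n, InH1 N α (v n))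
    (hu : InH1 N α u) (h : Tendsto (fun n => h1DistSq (v n) u) atTop (𝓝 0)) :
    Tendsto (fun n => gradL2 N (v n) * l2norm N (v n) ^ σ) atTop
      (𝓝 (gradL2 N u * l2norm N u ^ σ)) :=
  ((Real.continuous_sqrt.tendsto _).comp (tendsto_integral_gradNormSq hv hu h)).mul
    (((Real.continuous_sqrt.tendsto _).comp (tendsto_massM hv hu h)).rpow_const (Or.inr hσ))

theorem tendsto_energyE_mul_massM_rpow {C a b σ : ℝ} (hα : -1 ≤ α) (ha : 0 < a) (hb : 0 < b)
    (hσ : 0 ≤ σ)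
    (hGN : ∀ f, InH1 N α f → lpnorm N (α + 2) f ^ (α + 2) ≤ C * l2norm N f ^ a * gradL2 N f ^ b)
    (hv : ∀ n, InH1 N α (v n)) (hu : InH1 N α u)
    (h : Tendsto (fun n => h1DistSq (v n) u) atTop (𝓝 0)) :
    Tendsto (fun n => energyE N α (v n) * massM N (v n) ^ σ) atTop
      (𝓝 (energyE N α u * massM N u ^ σ)) :=
  (((tendsto_integral_gradNormSq hv hu h).const_mul _).sub
    ((tendsto_integral_norm_rpow hα ha hb hGN hv hu h).const_mul _)).mul
      ((tendsto_massM hv hu h).rpow_const (Or.inr hσ))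

end SobolevFunctionals

theorem intercritical_exponents {N : ℕ} {α σ : ℝ} (hN : 1 ≤ N) (hα₁ : 4 / (N : ℝ) < α)
    (hα₂ : 3 ≤ N → α < 4 / ((N : ℝ) - 2))
    (hσ : σ = (4 - ((N : ℝ) - 2) * α) / ((N : ℝ) * α - 4)) :
    0 < α ∧ 2 < (N : ℝ) * α / 2 ∧ 0 < (4 - ((N : ℝ) - 2) * α) / 2 ∧
      σ * ((N : ℝ) * α / 2 - 2) = (4 - ((N : ℝ) - 2) * α) / 2 ∧ 0 < σ := by
  have hN₀ : (0 : ℝ) < N := by exact_mod_cast hN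
  have hα : 0 < α := lt_trans (by positivity) hα₁
  have hNα : 4 < (N : ℝ) * α := by rwa [div_lt_iff₀ hN₀, mul_comm] at hα₁
  have ha : 0 < 4 - ((N : ℝ) - 2) * α := by
    rcases le_or_gt 3 N with h3 | h3
    · have h3' : (3 : ℝ) ≤ N := by exact_mod_cast h3
      have := (lt_div_iff₀ (by linarith : (0 : ℝ) < N - 2)).1 (hα₂ h3)
      linarith
    · have : (N : ℝ) ≤ 2 := by exact_mod_cast (by omega : N ≤ 2)
      nlinarith
  refine ⟨hα, by linarith, by linarith, ?_, hσ ▸ div_pos ha (by linarith)⟩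
  have : (N : ℝ) * α - 4 ≠ 0 := by linarith
  rw [hσ]
  field_simp
  ring

theorem K_omega_closed_and_gradient_bound_general
    (N : ℕ) (hN : 1 ≤ N) (α : ℝ) (hα₁ : 4 / (N : ℝ) < α)
    (hα₂ : 3 ≤ N → α < 4 / ((N : ℝ) - 2))
    (σ : ℝ) (hσ : σ = (4 - ((N : ℝ) - 2) * α) / ((N : ℝ) * α - 4))
    (Q : Rn N → ℂ) (hQpos : 0 < massM N Q)
    (CGN : ℝ)
    (hCGN : CGN = lpnorm N (α + 2) Q ^ (α + 2) /
      (l2norm N Q ^ ((4 - ((N : ℝ) - 2) * α) / 2) * gradL2 N Q ^ ((N : ℝ) * α / 2)))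
    (hGN : ∀ f : Rn N → ℂ, InH1 N α f →
      lpnorm N (α + 2) f ^ (α + 2) ≤
        CGN * l2norm N f ^ ((4 - ((N : ℝ) - 2) * α) / 2) * gradL2 N f ^ ((N : ℝ) * α / 2))
    (hPoho₁ : massM N Q = ((4 - ((N : ℝ) - 2) * α) / ((N : ℝ) * α)) * gradL2 N Q ^ 2)
    (hPoho₂ : massM N Q =
      ((4 - ((N : ℝ) - 2) * α) / (2 * (α + 2))) * lpnorm N (α + 2) Q ^ (α + 2))
    (ω : ℝ) (hω₀ : 0 < ω) (hω₁ : ω < 1)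
    (K : Set (Rn N → ℂ))
    (hK : K = {u | InH1 N α u ∧
      energyE N α u * massM N u ^ σ ≤ ω * (energyE N α Q * massM N Q ^ σ) ∧
      gradL2 N u * l2norm N u ^ σ < gradL2 N Q * l2norm N Q ^ σ}) :
    -- `K` is (sequentially) closed in `H¹(ℝ^N)` for the `H¹`-norm topology
    (∀ (v : ℕ → Rn N → ℂ) (u : Rn N → ℂ), (∀ n, v n ∈ K) → InH1 N α u →
      Tendsto (fun n => (∫ x, ‖v n x - u x‖ ^ 2) +
        ∫ x, gradNormSq N (fun y => v n y - u y) x) atTop (nhds 0) →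
      u ∈ K) ∧
    -- every element of `K` satisfies the `ω^{1/2}` gradient bound
    (∀ u ∈ K, gradL2 N u * l2norm N u ^ σ ≤
      Real.sqrt ω * (gradL2 N Q * l2norm N Q ^ σ)) := by
  obtain ⟨hα, hs, ha, hσa, hσ₀⟩ := intercritical_exponents hN hα₁ hα₂ hσ
  set s := (N : ℝ) * α / 2 with hs_def
  set a := (4 - ((N : ℝ) - 2) * α) / 2 with ha_def
  have hQ₁ : l2norm N Q ^ 2 = a / s * gradL2 N Q ^ 2 := by
    rw [l2norm_sq, hPoho₁, ha_def, hs_def]; ring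
  have hQ₂ : l2norm N Q ^ 2 = a / (α + 2) * lpnorm N (α + 2) Q ^ (α + 2) := by
    rw [l2norm_sq, hPoho₂, ha_def, div_div]
  have hmQ : 0 < l2norm N Q := Real.sqrt_pos.2 hQpos
  have hgQ : 0 < gradL2 N Q := (gradL2_nonneg Q).lt_of_ne' fun h => by
    rw [h, zero_pow two_ne_zero, mul_zero] at hQ₁; exact (pow_pos hmQ 2).ne' hQ₁
  set yQ := gradL2 N Q * l2norm N Q ^ σ
  have hyQ : 0 < yQ := by positivity
  have hC : CGN = (α + 2) / (s * yQ ^ (s - 2)) :=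
    hCGN.trans (gn_const_eq_of_pohozaev (by linarith) ha hσa hgQ hmQ hQ₁ hQ₂)
  have hEQ : energyE N α Q * massM N Q ^ σ = yQ ^ 2 * gnProfile s 1 := by
    rw [energyE_mul_massM_rpow (by linarith)]
    exact energy_eq_of_pohozaev_s7 (by linarith) ha.ne' (by linarith) hQ₁ hQ₂
  have bound : ∀ u ∈ K, gradL2 N u * l2norm N u ^ σ ≤ √ω * yQ := by
    rw [hK]
    rintro u ⟨hu, hEu, hlt⟩
    exact gradL2_mul_l2norm_rpow_le_of_energyE_le hs (by linarith) hσa hσ₀ hyQ hω₀ hω₁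
      (hC ▸ hGN u hu) (hEQ ▸ hEu) hlt
  refine ⟨fun v u hv hu hconv => ?_, bound⟩
  subst hK
  refine ⟨hu, ?_, ?_⟩
  · exact le_of_tendsto (tendsto_energyE_mul_massM_rpow (by linarith) ha (by linarith) hσ₀.le hGN
      (fun n => (hv n).1) hu hconv) (Eventually.of_forall fun n => (hv n).2.1)
  · calc _ ≤ √ω * yQ := le_of_tendsto (tendsto_gradL2_mul_l2norm_rpow hσ₀.le
          (fun n => (hv n).1) hu hconv) (Eventually.of_forall fun n => bound _ (hv n))
      _ < yQ := mul_lt_of_lt_one_left hyQ ((Real.sqrt_lt' one_pos).2 (by rwa [one_pow]))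

theorem K_omega_closed_and_gradient_bound
    (N : ℕ) (hN : 1 ≤ N) (α : ℝ) (hα₁ : 4 / (N : ℝ) < α)
    (hα₂ : 3 ≤ N → α < 4 / ((N : ℝ) - 2))
    (σ : ℝ) (hσ : σ = (4 - ((N : ℝ) - 2) * α) / ((N : ℝ) * α - 4))
    (Q : Rn N → ℂ) (hQH1 : InH1 N α Q) (hQpos : 0 < massM N Q)
    (CGN : ℝ)
    (hCGN : CGN = lpnorm N (α + 2) Q ^ (α + 2) /
      (l2norm N Q ^ ((4 - ((N : ℝ) - 2) * α) / 2) * gradL2 N Q ^ ((N : ℝ) * α / 2)))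
    (hGN : ∀ f : Rn N → ℂ, InH1 N α f →
      lpnorm N (α + 2) f ^ (α + 2) ≤
        CGN * l2norm N f ^ ((4 - ((N : ℝ) - 2) * α) / 2) * gradL2 N f ^ ((N : ℝ) * α / 2))
    (hPoho₁ : massM N Q = ((4 - ((N : ℝ) - 2) * α) / ((N : ℝ) * α)) * gradL2 N Q ^ 2)
    (hPoho₂ : massM N Q =
      ((4 - ((N : ℝ) - 2) * α) / (2 * (α + 2))) * lpnorm N (α + 2) Q ^ (α + 2))
    (ω : ℝ) (hω₀ : 0 < ω) (hω₁ : ω < 1)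
    (K : Set (Rn N → ℂ))
    (hK : K = {u | InH1 N α u ∧
      energyE N α u * massM N u ^ σ ≤ ω * (energyE N α Q * massM N Q ^ σ) ∧
      gradL2 N u * l2norm N u ^ σ < gradL2 N Q * l2norm N Q ^ σ}) :
    -- `K` is (sequentially) closed in `H¹(ℝ^N)` for the `H¹`-norm topology
    (∀ (v : ℕ → Rn N → ℂ) (u : Rn N → ℂ), (∀ n, v n ∈ K) → InH1 N α u →
      Tendsto (fun n => (∫ x, ‖v n x - u x‖ ^ 2) +
        ∫ x, gradNormSq N (fun y => v n y - u y) x) atTop (nhds 0) →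
      u ∈ K) ∧
    -- every element of `K` satisfies the `ω^{1/2}` gradient bound
    (∀ u ∈ K, gradL2 N u * l2norm N u ^ σ ≤
      Real.sqrt ω * (gradL2 N Q * l2norm N Q ^ σ)) :=
  K_omega_closed_and_gradient_bound_general N hN α hα₁ hα₂ σ hσ Q hQpos CGN hCGN hGN hPoho₁ hPoho₂ ω
    hω₀ hω₁ K hK
end
end
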